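/- arXiv:1302.5913 — 2 statements merged into one kernel-verified Lean document; each statement's English description precedes it below -/
import Mathlib

section
/- Let V be a finite set, b ∈ (0,1], and p, y : V → [0,1]; set x_e = p_e·y_e. Let I and J be independent random subsets of V, where each e ∈ V lies in I independently with probability b·y_e, and each e ∈ V lies in J independently with probability p_e. Let π_out, π_in : 2^V → 2^V be maps with π_out(A) ⊆ A and π_in(A) ⊆ A for all A ⊆ V, and let c_out, c_in ∈ [0,1]. Assume: (i) for every e ∈ V with b·y_e > 0, Pr[e ∈ π_out(I) | e ∈ I] ≥ c_out; (ii) if R is a random subset of V containing each e independently with probability b·x_e, then for every e with b·x_e > 0, Pr[e ∈ π_in(R) | e ∈ R] ≥ c_in; (iii) π_in is monotone: for all e ∈ A₁ ⊆ A₂ ⊆ V, if e ∈ π_in(A₂) then e ∈ π_in(A₁). Then for every e ∈ V, Pr[ e ∈ π_in( π_out(I) ∩ J ) ] ≥ b·(c_out + c_in − 1)·x_e. -/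
open Finset

/-- The probability mass of the outcome `ι` in the product of independent
Bernoulli distributions where coordinate `e` equals `true` with probability `p e`. -/
noncomputable def prodWeight {V : Type*} [Fintype V] (p : V → ℝ) (ι : V → Bool) : ℝ :=
  ∏ e, (if ι e then p e else 1 - p e)

/-- The subset of `V` encoded by the Boolean outcome `ι`. -/
def outcomeSet {V : Type*} [Fintype V] (ι : V → Bool) : Finset V :=
  univ.filter (fun e => ι e = true)


/-!
Pointwise, monotonicity of `π_in` gives `e ∈ π_in (π_out I ∩ J)` as soon as
`e ∈ π_in (I ∩ J)` and `e ∈ π_out I`, hence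
`1[e ∈ π_in (π_out I ∩ J)] ≥ 1[e ∈ π_in (I ∩ J)] + 1[e ∈ π_out I] 1[e ∈ J] - 1[e ∈ I] 1[e ∈ J]`.
Take expectations: `I ∩ J` is a product-Bernoulli set with marginals `b y p = b x`, so the first
term contributes at least `c_in b x_e`; by independence of `I` and `J` the second contributes at
least `c_out b y_e p_e` and the third exactly `b y_e p_e = b x_e`.
-/

section ProductBernoulli

variable {V : Type*} [Fintype V]

theorem prodWeight_nonneg {p : V → ℝ} (hp0 : ∀ e, 0 ≤ p e) (hp1 : ∀ e, p e ≤ 1)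
    (ι : V → Bool) : 0 ≤ prodWeight p ι :=
  prod_nonneg fun e _ => by
    cases ι e
    · simpa using hp1 e
    · simpa using hp0 e

variable [DecidableEq V]

theorem sum_prodWeight_mul_prod (p : V → ℝ) (g : V → Bool → ℝ) :
    ∑ ι, prodWeight p ι * ∏ f, g f (ι f) = ∏ f, (p f * g f true + (1 - p f) * g f false) := by
  simp only [prodWeight, ← prod_mul_distrib]
  rw [← Fintype.prod_sum (fun f (a : Bool) => (if a then p f else 1 - p f) * g f a)]
  refine prod_congr rfl fun f _ => ?_
  simp

theorem prodWeight_mul_eq_sum_sum_and (p q : V → ℝ) (ρ : V → Bool) :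
    ∑ ι, prodWeight p ι * ∑ ω, prodWeight q ω *
        (if (fun f => ι f && ω f) = ρ then (1 : ℝ) else 0)
      = prodWeight (fun f => p f * q f) ρ := by
  have hinner : ∀ ι : V → Bool, ∑ ω, prodWeight q ω *
      (if (fun f => ι f && ω f) = ρ then (1 : ℝ) else 0)
        = ∏ f, (q f * (if ι f = ρ f then 1 else 0) + (1 - q f) * (if false = ρ f then 1 else 0)) := by
    intro ι
    calc _ = ∑ ω, prodWeight q ω * ∏ f, if (ι f && ω f) = ρ f then (1 : ℝ) else 0 := by
          simp [prod_boole, funext_iff]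
      _ = _ := by
          rw [sum_prodWeight_mul_prod q (fun f c => if (ι f && c) = ρ f then (1 : ℝ) else 0)]
          simp
  simp only [hinner]
  rw [sum_prodWeight_mul_prod p (fun f a => q f * (if a = ρ f then (1 : ℝ) else 0)
    + (1 - q f) * (if false = ρ f then 1 else 0))]
  refine prod_congr rfl fun f _ => ?_
  cases ρ f
  · simp only [Bool.true_eq_false, Bool.false_eq_true, ite_true, ite_false, mul_zero, mul_one]
    ring
  · simp

noncomputable def prodExpect (p : V → ℝ) (g : Finset V → ℝ) : ℝ :=
  ∑ ι, prodWeight p ι * g (outcomeSet ι)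

theorem prodExpect_add (p : V → ℝ) (g h : Finset V → ℝ) :
    prodExpect p (fun A => g A + h A) = prodExpect p g + prodExpect p h := by
  simp only [prodExpect, mul_add, sum_add_distrib]

theorem prodExpect_sub (p : V → ℝ) (g h : Finset V → ℝ) :
    prodExpect p (fun A => g A - h A) = prodExpect p g - prodExpect p h := by
  simp only [prodExpect, mul_sub, sum_sub_distrib]

theorem prodExpect_const_mul (p : V → ℝ) (c : ℝ) (g : Finset V → ℝ) :
    prodExpect p (fun A => c * g A) = c * prodExpect p g := by
  simp only [prodExpect, mul_sum, mul_left_comm]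

theorem prodExpect_mul_const (p : V → ℝ) (c : ℝ) (g : Finset V → ℝ) :
    prodExpect p (fun A => g A * c) = prodExpect p g * c := by
  simp only [prodExpect, sum_mul, mul_assoc]

theorem prodExpect_mono {p : V → ℝ} (hp0 : ∀ e, 0 ≤ p e) (hp1 : ∀ e, p e ≤ 1)
    {g h : Finset V → ℝ} (hgh : ∀ A, g A ≤ h A) : prodExpect p g ≤ prodExpect p h :=
  sum_le_sum fun ι _ => mul_le_mul_of_nonneg_left (hgh _) (prodWeight_nonneg hp0 hp1 ι)

theorem prodExpect_nonneg {p : V → ℝ} (hp0 : ∀ e, 0 ≤ p e) (hp1 : ∀ e, p e ≤ 1)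
    {g : Finset V → ℝ} (hg : ∀ A, 0 ≤ g A) : 0 ≤ prodExpect p g := by
  simpa [prodExpect] using prodExpect_mono hp0 hp1 hg (g := fun _ => 0)

theorem prodExpect_ite_mem (p : V → ℝ) (e : V) :
    prodExpect p (fun A => if e ∈ A then 1 else 0) = p e := by
  calc prodExpect p (fun A => if e ∈ A then 1 else 0)
      = ∑ ι, prodWeight p ι * ∏ f, if f = e then (if ι f then 1 else 0) else 1 := by
        simp [prodExpect, prod_ite_eq', outcomeSet]
    _ = p e := by
        rw [sum_prodWeight_mul_prod p (fun f a => if f = e then (if a then 1 else 0) else 1)]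
        simp [apply_ite, prod_ite_eq']

theorem prodExpect_prodExpect_inter (p q : V → ℝ) (g : Finset V → ℝ) :
    prodExpect p (fun I => prodExpect q (fun J => g (I ∩ J)))
      = prodExpect (fun f => p f * q f) g := by
  have hinter : ∀ ι ω : V → Bool,
      outcomeSet ι ∩ outcomeSet ω = outcomeSet (fun f => ι f && ω f) := by
    intro ι ω; ext; simp [outcomeSet]
  calc prodExpect p (fun I => prodExpect q (fun J => g (I ∩ J)))
      = ∑ ι, prodWeight p ι * ∑ ω, prodWeight q ω *
          ∑ ρ, (if (fun f => ι f && ω f) = ρ then (1 : ℝ) else 0) * g (outcomeSet ρ) := by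
        simp [prodExpect, hinter]
    _ = ∑ ρ, (∑ ι, prodWeight p ι * ∑ ω, prodWeight q ω *
          (if (fun f => ι f && ω f) = ρ then (1 : ℝ) else 0)) * g (outcomeSet ρ) := by
        simp_rw [mul_sum, sum_mul, mul_assoc]
        exact (sum_congr rfl fun ι _ => sum_comm).trans sum_comm
    _ = prodExpect (fun f => p f * q f) g := by
        simp only [prodWeight_mul_eq_sum_sum_and, prodExpect]

end ProductBernoulli

section ContentionResolution

variable {V : Type*} [DecidableEq V] {πout πin : Finset V → Finset V}

theorem ite_mem_inner_outer_ge (hπout : ∀ A, πout A ⊆ A) (hπin : ∀ A, πin A ⊆ A)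
    (hmono : ∀ (A₁ A₂ : Finset V) (e : V), e ∈ A₁ → A₁ ⊆ A₂ → e ∈ πin A₂ → e ∈ πin A₁)
    (I J : Finset V) (e : V) :
    (if e ∈ πin (I ∩ J) then (1 : ℝ) else 0)
        + (if e ∈ πout I then 1 else 0) * (if e ∈ J then 1 else 0)
        - (if e ∈ I then 1 else 0) * (if e ∈ J then 1 else 0)
      ≤ if e ∈ πin (πout I ∩ J) then 1 else 0 := by
  have hout : e ∈ πout I → e ∈ I := fun h => hπout I h
  have hin : e ∈ πin (I ∩ J) → e ∈ I ∧ e ∈ J := fun h => mem_inter.mp (hπin _ h)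
  have hboth : e ∈ πin (I ∩ J) → e ∈ πout I → e ∈ πin (πout I ∩ J) := fun h h' =>
    hmono _ _ e (mem_inter.mpr ⟨h', (hin h).2⟩) (inter_subset_inter (hπout I) subset_rfl) h
  split_ifs <;> simp_all

variable [Fintype V]

theorem prodExpect_mem_inner_outer_ge {p q : V → ℝ} (hp0 : ∀ e, 0 ≤ p e) (hp1 : ∀ e, p e ≤ 1)
    (hq0 : ∀ e, 0 ≤ q e) (hq1 : ∀ e, q e ≤ 1) (hπout : ∀ A, πout A ⊆ A) (hπin : ∀ A, πin A ⊆ A)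
    (hmono : ∀ (A₁ A₂ : Finset V) (e : V), e ∈ A₁ → A₁ ⊆ A₂ → e ∈ πin A₂ → e ∈ πin A₁)
    (e : V) :
    prodExpect (fun f => p f * q f) (fun A => if e ∈ πin A then 1 else 0)
        + (prodExpect p (fun A => if e ∈ πout A then 1 else 0) - p e) * q e
      ≤ prodExpect p (fun I => prodExpect q (fun J => if e ∈ πin (πout I ∩ J) then 1 else 0)) :=
  calc _ = prodExpect p (fun I => prodExpect q (fun J =>
          (if e ∈ πin (I ∩ J) then (1 : ℝ) else 0)
            + (if e ∈ πout I then 1 else 0) * (if e ∈ J then 1 else 0)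
            - (if e ∈ I then 1 else 0) * (if e ∈ J then 1 else 0))) := by
        rw [← prodExpect_prodExpect_inter]
        simp only [prodExpect_add, prodExpect_sub, prodExpect_const_mul, prodExpect_mul_const,
          prodExpect_ite_mem]
        ring
    _ ≤ _ := prodExpect_mono hp0 hp1 fun I => prodExpect_mono hq0 hq1 fun J =>
        ite_mem_inner_outer_ge hπout hπin hmono I J e

theorem mul_le_prodExpect_of_pos {p : V → ℝ} (hp0 : ∀ e, 0 ≤ p e) (hp1 : ∀ e, p e ≤ 1)
    {g : Finset V → ℝ} (hg : ∀ A, 0 ≤ g A) {c : ℝ} {e : V}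
    (h : 0 < p e → c * p e ≤ prodExpect p g) : c * p e ≤ prodExpect p g := by
  rcases (hp0 e).eq_or_lt with h0 | hpos
  · rw [← h0, mul_zero]
    exact prodExpect_nonneg hp0 hp1 hg
  · exact h hpos

end ContentionResolution

theorem crScheme_key_lemma_general {V : Type*} [Fintype V] [DecidableEq V]
    (b : ℝ) (hb0 : 0 < b) (hb1 : b ≤ 1)
    (p y : V → ℝ) (hp0 : ∀ e, 0 ≤ p e) (hp1 : ∀ e, p e ≤ 1)
    (hy0 : ∀ e, 0 ≤ y e) (hy1 : ∀ e, y e ≤ 1)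
    (x : V → ℝ) (hx : ∀ e, x e = p e * y e)
    (πout πin : Finset V → Finset V)
    (hπout : ∀ A, πout A ⊆ A) (hπin : ∀ A, πin A ⊆ A)
    (cout cin : ℝ)
    -- (i) π_out is a (b, c_out) CR-scheme for y
    (hCRout : ∀ e : V, 0 < b * y e →
      (∑ ι : V → Bool, prodWeight (fun f => b * y f) ι *
        (if e ∈ πout (outcomeSet ι) then (1 : ℝ) else 0))
      ≥ cout * (b * y e))
    -- (ii) π_in is a (b, c_in) CR-scheme for x
    (hCRin : ∀ e : V, 0 < b * x e →
      (∑ ρ : V → Bool, prodWeight (fun f => b * x f) ρ *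
        (if e ∈ πin (outcomeSet ρ) then (1 : ℝ) else 0))
      ≥ cin * (b * x e))
    -- (iii) π_in is monotone
    (hmono : ∀ (A₁ A₂ : Finset V) (e : V), e ∈ A₁ → A₁ ⊆ A₂ → e ∈ πin A₂ → e ∈ πin A₁)
    (e : V) :
    (∑ ι : V → Bool, ∑ ω : V → Bool,
        prodWeight (fun f => b * y f) ι * prodWeight p ω *
          (if e ∈ πin (πout (outcomeSet ι) ∩ outcomeSet ω) then (1 : ℝ) else 0))
      ≥ b * (cout + cin - 1) * x e := by
  have hby0 : ∀ f, 0 ≤ b * y f := fun f => mul_nonneg hb0.le (hy0 f)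
  have hby1 : ∀ f, b * y f ≤ 1 := fun f => mul_le_one₀ hb1 (hy0 f) (hy1 f)
  have hbx : (fun f => b * y f * p f) = fun f => b * x f := by
    funext f; rw [hx]; ring
  have hbx0 : ∀ f, 0 ≤ b * x f := fun f => by
    rw [hx]; exact mul_nonneg hb0.le (mul_nonneg (hp0 f) (hy0 f))
  have hbx1 : ∀ f, b * x f ≤ 1 := fun f => by
    rw [hx]; exact mul_le_one₀ hb1 (mul_nonneg (hp0 f) (hy0 f)) (mul_le_one₀ (hp1 f) (hy0 f) (hy1 f))
  have hout : cout * (b * y e)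
      ≤ prodExpect (fun f => b * y f) (fun A => if e ∈ πout A then 1 else 0) :=
    mul_le_prodExpect_of_pos hby0 hby1 (fun _ => ite_nonneg zero_le_one le_rfl) (hCRout e)
  have hin : cin * (b * x e)
      ≤ prodExpect (fun f => b * x f) (fun A => if e ∈ πin A then 1 else 0) :=
    mul_le_prodExpect_of_pos hbx0 hbx1 (fun _ => ite_nonneg zero_le_one le_rfl) (hCRin e)
  have hcomp := prodExpect_mem_inner_outer_ge hby0 hby1 hp0 hp1 hπout hπin hmono e
  rw [hbx] at hcomp
  have hLHS : (∑ ι : V → Bool, ∑ ω : V → Bool,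
      prodWeight (fun f => b * y f) ι * prodWeight p ω *
        (if e ∈ πin (πout (outcomeSet ι) ∩ outcomeSet ω) then (1 : ℝ) else 0))
      = prodExpect (fun f => b * y f) (fun I => prodExpect p (fun J =>
          if e ∈ πin (πout I ∩ J) then 1 else 0)) := by
    simp only [prodExpect, mul_sum, mul_assoc]
  rw [ge_iff_le, hLHS]
  linear_combination hcomp + hin + mul_le_mul_of_nonneg_right hout (hp0 e) + (cout - 1) * b * hx e

/-- Key CR-scheme lemma: if `π_out` is a `(b, c_out)` CR-scheme for `y` and `π_in` is a
monotone `(b, c_in)` CR-scheme for `x = p·y`, then each element `e` survives both rounds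
with probability at least `b·(c_out + c_in − 1)·x e`. Here `I` has marginals `b·y` and
the active set `J` has marginals `p`, independently. -/
theorem crScheme_key_lemma {V : Type*} [Fintype V] [DecidableEq V]
    (b : ℝ) (hb0 : 0 < b) (hb1 : b ≤ 1)
    (p y : V → ℝ) (hp0 : ∀ e, 0 ≤ p e) (hp1 : ∀ e, p e ≤ 1)
    (hy0 : ∀ e, 0 ≤ y e) (hy1 : ∀ e, y e ≤ 1)
    (x : V → ℝ) (hx : ∀ e, x e = p e * y e)
    (πout πin : Finset V → Finset V)
    (hπout : ∀ A, πout A ⊆ A) (hπin : ∀ A, πin A ⊆ A)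
    (cout cin : ℝ) (hcout0 : 0 ≤ cout) (hcout1 : cout ≤ 1)
    (hcin0 : 0 ≤ cin) (hcin1 : cin ≤ 1)
    -- (i) π_out is a (b, c_out) CR-scheme for y
    (hCRout : ∀ e : V, 0 < b * y e →
      (∑ ι : V → Bool, prodWeight (fun f => b * y f) ι *
        (if e ∈ πout (outcomeSet ι) then (1 : ℝ) else 0))
      ≥ cout * (b * y e))
    -- (ii) π_in is a (b, c_in) CR-scheme for x
    (hCRin : ∀ e : V, 0 < b * x e →
      (∑ ρ : V → Bool, prodWeight (fun f => b * x f) ρ *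
        (if e ∈ πin (outcomeSet ρ) then (1 : ℝ) else 0))
      ≥ cin * (b * x e))
    -- (iii) π_in is monotone
    (hmono : ∀ (A₁ A₂ : Finset V) (e : V), e ∈ A₁ → A₁ ⊆ A₂ → e ∈ πin A₂ → e ∈ πin A₁)
    (e : V) :
    (∑ ι : V → Bool, ∑ ω : V → Bool,
        prodWeight (fun f => b * y f) ι * prodWeight p ω *
          (if e ∈ πin (πout (outcomeSet ι) ∩ outcomeSet ω) then (1 : ℝ) else 0))
      ≥ b * (cout + cin - 1) * x e :=
  crScheme_key_lemma_general b hb0 hb1 p y hp0 hp1 hy0 hy1 x hx πout πin hπout hπin cout cin hCRout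
    hCRin hmono e
end

section
/- Let V be a finite set, b ∈ (0,1], and p, y : V → [0,1]; set x_e = p_e·y_e. Let I and J be independent random subsets of V, where each e ∈ V lies in I independently with probability b·y_e, and each e ∈ V lies in J independently with probability p_e. Let π_out, π_in : 2^V → 2^V be maps with π_out(A) ⊆ A and π_in(A) ⊆ A for all A ⊆ V, and let c_in ∈ [0,1]. Assume: (ii) if R is a random subset of V containing each e independently with probability b·x_e, then for every e with b·x_e > 0, Pr[e ∈ π_in(R) | e ∈ R] ≥ c_in; (iii) π_in is monotone: for all e ∈ A₁ ⊆ A₂ ⊆ V, if e ∈ π_in(A₂) then e ∈ π_in(A₁). Then for every e ∈ V, Pr[ e ∉ π_in( π_out(I) ∩ J ) and e ∈ I ∩ J ∩ π_out(I) ] ≤ (1 − c_in)·b·x_e. -/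
/-!
Write `R = I ∩ J`; coordinatewise, `R` is again a product of independent coins, with marginals
`b·y_e·p_e = b·x_e`. Since `π_out(I) ∩ J ⊆ R`, monotonicity of `π_in` turns the event into
`e ∈ R ∧ e ∉ π_in(R)`, whose probability is `b·x_e − Pr[e ∈ π_in(R)] ≤ (1 − c_in)·b·x_e`
by the CR-property of `π_in`.
-/

open Finset

lemma Fintype.sum_sum_prod_eq_prod_sum_sum {V R α β : Type*} [Fintype V] [DecidableEq V]
    [CommSemiring R] [Fintype α] [Fintype β] (F : V → α → β → R) :
    ∑ x : V → α, ∑ y : V → β, ∏ v, F v (x v) (y v) = ∏ v, ∑ a, ∑ b, F v a b := by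
  simp only [Fintype.prod_sum]

lemma sum_sum_ite_and_eq (s t : ℝ) (d : Bool) :
    ∑ a : Bool, ∑ c : Bool, (if a then s else 1 - s) * (if c then t else 1 - t) *
      (if (a && c) = d then 1 else 0) = if d then s * t else 1 - s * t := by
  cases d
  · simp; ring
  · simp

section

variable {V : Type*} [Fintype V]

lemma prodWeight_nonneg_s6 {q : V → ℝ} (h0 : ∀ v, 0 ≤ q v) (h1 : ∀ v, q v ≤ 1) (ρ : V → Bool) :
    0 ≤ prodWeight q ρ :=
  prod_nonneg fun v _ => by cases ρ v <;> simp [h0 v, h1 v]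

variable [DecidableEq V]

lemma outcomeSet_and (ι ω : V → Bool) :
    outcomeSet (fun v => ι v && ω v) = outcomeSet ι ∩ outcomeSet ω := by
  ext v; simp [outcomeSet]

lemma sum_prodWeight_mul_ite_mem (q : V → ℝ) (e : V) :
    ∑ ρ, prodWeight q ρ * (if e ∈ outcomeSet ρ then 1 else 0) = q e := by
  have hcoord : q e = ∏ v, ∑ a : Bool,
      (if a then q v else 1 - q v) * (if v = e then (if a then 1 else 0) else 1) := by
    rw [prod_eq_single e (fun v _ hv => by simp [hv]) (by simp)]
    simp
  rw [hcoord, Fintype.prod_sum]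
  refine sum_congr rfl fun ρ _ => ?_
  rw [prod_mul_distrib, Fintype.prod_ite_eq']
  simp [prodWeight, outcomeSet]

lemma sum_sum_prodWeight_mul_ite_and_eq (q r : V → ℝ) (ρ : V → Bool) :
    ∑ ι, ∑ ω, prodWeight q ι * prodWeight r ω *
      (if (fun v => ι v && ω v) = ρ then 1 else 0) = prodWeight (q * r) ρ := by
  simp only [funext_iff, ← Fintype.prod_boole, prodWeight, ← prod_mul_distrib]
  exact (Fintype.sum_sum_prod_eq_prod_sum_sum fun v a c => (if a then q v else 1 - q v) *
      (if c then r v else 1 - r v) * (if (a && c) = ρ v then 1 else 0)).trans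
    (prod_congr rfl fun v _ => sum_sum_ite_and_eq _ _ _)

lemma sum_sum_prodWeight_mul_inter (q r : V → ℝ) (F : Finset V → ℝ) :
    ∑ ι, ∑ ω, prodWeight q ι * prodWeight r ω * F (outcomeSet ι ∩ outcomeSet ω) =
      ∑ ρ, prodWeight (q * r) ρ * F (outcomeSet ρ) := by
  simp_rw [← outcomeSet_and, ← sum_sum_prodWeight_mul_ite_and_eq q r, sum_mul]
  rw [sum_comm_cycle, sum_comm_cycle]
  refine sum_congr rfl fun ι _ => sum_congr rfl fun ω _ => ?_
  simp

lemma sum_prodWeight_mul_ite_mem_and_not_mem (q : V → ℝ) (π : Finset V → Finset V)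
    (hπ : ∀ A, π A ⊆ A) (e : V) :
    ∑ ρ, prodWeight q ρ * (if e ∈ outcomeSet ρ ∧ e ∉ π (outcomeSet ρ) then 1 else 0) =
      q e - ∑ ρ, prodWeight q ρ * (if e ∈ π (outcomeSet ρ) then 1 else 0) := by
  rw [← sum_prodWeight_mul_ite_mem q e, ← sum_sub_distrib]
  refine sum_congr rfl fun ρ _ => ?_
  by_cases he : e ∈ π (outcomeSet ρ)
  · simp [he, hπ _ he]
  · simp [he]

end

lemma mem_inter_and_not_mem_of_not_mem_inter {V : Type*} [DecidableEq V]
    {πout πin : Finset V → Finset V} (hπout : ∀ A, πout A ⊆ A)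
    (hmono : ∀ (A₁ A₂ : Finset V) (e : V), e ∈ A₁ → A₁ ⊆ A₂ → e ∈ πin A₂ → e ∈ πin A₁)
    {I J : Finset V} {e : V} (hdisc : e ∉ πin (πout I ∩ J)) (hJ : e ∈ J) (hout : e ∈ πout I) :
    e ∈ I ∩ J ∧ e ∉ πin (I ∩ J) :=
  ⟨mem_inter.2 ⟨hπout I hout, hJ⟩, fun h =>
    hdisc (hmono _ _ e (mem_inter.2 ⟨hout, hJ⟩) (inter_subset_inter_right (hπout I)) h)⟩

lemma ite_one_zero_le_ite_one_zero {P Q : Prop} [Decidable P] [Decidable Q] (h : P → Q) :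
    (if P then 1 else 0 : ℝ) ≤ if Q then 1 else 0 := by
  by_cases hP : P
  · simp [hP, h hP]
  · by_cases hQ : Q <;> simp [hP, hQ]

theorem crScheme_discard_bound_general {V : Type*} [Fintype V] [DecidableEq V]
    (b : ℝ) (hb0 : 0 < b) (hb1 : b ≤ 1)
    (p y : V → ℝ) (hp0 : ∀ e, 0 ≤ p e) (hp1 : ∀ e, p e ≤ 1)
    (hy0 : ∀ e, 0 ≤ y e) (hy1 : ∀ e, y e ≤ 1)
    (x : V → ℝ) (hx : ∀ e, x e = p e * y e)
    (πout πin : Finset V → Finset V)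
    (hπout : ∀ A, πout A ⊆ A) (hπin : ∀ A, πin A ⊆ A)
    (cin : ℝ)
    -- (ii) π_in is a (b, c_in) CR-scheme for x
    (hCRin : ∀ e : V, 0 < b * x e →
      (∑ ρ : V → Bool, prodWeight (fun f => b * x f) ρ *
        (if e ∈ πin (outcomeSet ρ) then (1 : ℝ) else 0))
      ≥ cin * (b * x e))
    -- (iii) π_in is monotone
    (hmono : ∀ (A₁ A₂ : Finset V) (e : V), e ∈ A₁ → A₁ ⊆ A₂ → e ∈ πin A₂ → e ∈ πin A₁)
    (e : V) :
    (∑ ι : V → Bool, ∑ ω : V → Bool,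
        prodWeight (fun f => b * y f) ι * prodWeight p ω *
          (if e ∉ πin (πout (outcomeSet ι) ∩ outcomeSet ω) ∧
              e ∈ outcomeSet ι ∧ e ∈ outcomeSet ω ∧ e ∈ πout (outcomeSet ι)
           then (1 : ℝ) else 0))
      ≤ (1 - cin) * (b * x e) := by
  have hby0 v : 0 ≤ b * y v := mul_nonneg hb0.le (hy0 v)
  have hby1 v : b * y v ≤ 1 := mul_le_one₀ hb1 (hy0 v) (hy1 v)
  have hbx : (fun f => b * y f) * p = fun f => b * x f := by
    funext v; simp only [Pi.mul_apply, hx v]; ring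
  have hbx0 v : 0 ≤ b * x v := hx v ▸ mul_nonneg hb0.le (mul_nonneg (hp0 v) (hy0 v))
  have hbx1 v : b * x v ≤ 1 := hx v ▸ mul_le_one₀ hb1 (mul_nonneg (hp0 v) (hy0 v))
    (mul_le_one₀ (hp1 v) (hy0 v) (hy1 v))
  set S := ∑ ρ : V → Bool, prodWeight (fun f => b * x f) ρ *
    (if e ∈ πin (outcomeSet ρ) then (1 : ℝ) else 0)
  have hS0 : 0 ≤ S := sum_nonneg fun ρ _ =>
    mul_nonneg (prodWeight_nonneg_s6 hbx0 hbx1 ρ) (by split_ifs <;> norm_num)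
  calc _ ≤ ∑ ι : V → Bool, ∑ ω : V → Bool, prodWeight (fun f => b * y f) ι * prodWeight p ω *
        (if e ∈ outcomeSet ι ∩ outcomeSet ω ∧ e ∉ πin (outcomeSet ι ∩ outcomeSet ω)
          then 1 else 0) :=
        sum_le_sum fun ι _ => sum_le_sum fun ω _ =>
          mul_le_mul_of_nonneg_left
            (ite_one_zero_le_ite_one_zero fun ⟨hdisc, _, hJ, hout⟩ =>
              mem_inter_and_not_mem_of_not_mem_inter hπout hmono hdisc hJ hout)
            (mul_nonneg (prodWeight_nonneg_s6 hby0 hby1 ι) (prodWeight_nonneg_s6 hp0 hp1 ω))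
    _ = b * x e - S := by
        rw [sum_sum_prodWeight_mul_inter _ _
          (fun R => if e ∈ R ∧ e ∉ πin R then 1 else 0), hbx,
          sum_prodWeight_mul_ite_mem_and_not_mem _ _ hπin]
    _ ≤ (1 - cin) * (b * x e) := by
        rcases (hbx0 e).eq_or_lt with hzero | hpos
        · rw [← hzero]; linarith
        · linarith [hCRin e hpos]

/-- Intermediate CR-scheme bound: the probability that `e` survives the outer scheme
and is active, but is discarded by the monotone inner `(b, c_in)` CR-scheme, is at most
`(1 − c_in)·b·x e`. Here `I` has marginals `b·y` and the active set `J` has marginals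
`p`, independently. -/
theorem crScheme_discard_bound {V : Type*} [Fintype V] [DecidableEq V]
    (b : ℝ) (hb0 : 0 < b) (hb1 : b ≤ 1)
    (p y : V → ℝ) (hp0 : ∀ e, 0 ≤ p e) (hp1 : ∀ e, p e ≤ 1)
    (hy0 : ∀ e, 0 ≤ y e) (hy1 : ∀ e, y e ≤ 1)
    (x : V → ℝ) (hx : ∀ e, x e = p e * y e)
    (πout πin : Finset V → Finset V)
    (hπout : ∀ A, πout A ⊆ A) (hπin : ∀ A, πin A ⊆ A)
    (cin : ℝ) (hcin0 : 0 ≤ cin) (hcin1 : cin ≤ 1)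
    -- (ii) π_in is a (b, c_in) CR-scheme for x
    (hCRin : ∀ e : V, 0 < b * x e →
      (∑ ρ : V → Bool, prodWeight (fun f => b * x f) ρ *
        (if e ∈ πin (outcomeSet ρ) then (1 : ℝ) else 0))
      ≥ cin * (b * x e))
    -- (iii) π_in is monotone
    (hmono : ∀ (A₁ A₂ : Finset V) (e : V), e ∈ A₁ → A₁ ⊆ A₂ → e ∈ πin A₂ → e ∈ πin A₁)
    (e : V) :
    (∑ ι : V → Bool, ∑ ω : V → Bool,
        prodWeight (fun f => b * y f) ι * prodWeight p ω *
          (if e ∉ πin (πout (outcomeSet ι) ∩ outcomeSet ω) ∧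
              e ∈ outcomeSet ι ∧ e ∈ outcomeSet ω ∧ e ∈ πout (outcomeSet ι)
           then (1 : ℝ) else 0))
      ≤ (1 - cin) * (b * x e) :=
  crScheme_discard_bound_general b hb0 hb1 p y hp0 hp1 hy0 hy1 x hx πout πin hπout hπin cin hCRin
    hmono e
end
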